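/- Let G be a group-groupoid with identity object e, let M = G_e be the costar at e (all arrows with target e) with group structure induced from G, let P = Ob(G), and let μ : M → P be the restriction of the source map. Define an action of P on M by m^p = (1_p)̅ · m · 1_p (group conjugation by the identity arrow at p). Then (M, P, μ) is a crossed module. -/
import Mathlib


universe u v

structure GroupGroupoid where
  Obj : Type u
  Arr : Type v
  [objGroup : Group Obj]
  [arrGroup : Group Arr]
  src : Arr →* Obj
  tgt : Arr →* Obj
  ident : Obj →* Arr
  comp : (a b : Arr) → tgt a = src b → Arr
  ginv : Arr → Arr
  src_ident : ∀ x, src (ident x) = x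
  tgt_ident : ∀ x, tgt (ident x) = x
  src_comp : ∀ a b h, src (comp a b h) = src a
  tgt_comp : ∀ a b h, tgt (comp a b h) = tgt b
  ident_comp : ∀ (a : Arr) (h : tgt (ident (src a)) = src a), comp (ident (src a)) a h = a
  comp_ident : ∀ (a : Arr) (h : tgt a = src (ident (tgt a))), comp a (ident (tgt a)) h = a
  comp_assoc : ∀ (a b c : Arr) (h1 : tgt a = src b) (h2 : tgt (comp a b h1) = src c)
    (h3 : tgt b = src c) (h4 : tgt a = src (comp b c h3)),
    comp (comp a b h1) c h2 = comp a (comp b c h3) h4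
  src_ginv : ∀ a, src (ginv a) = tgt a
  tgt_ginv : ∀ a, tgt (ginv a) = src a
  comp_ginv : ∀ (a : Arr) (h : tgt a = src (ginv a)), comp a (ginv a) h = ident (src a)
  ginv_comp : ∀ (a : Arr) (h : tgt (ginv a) = src a), comp (ginv a) a h = ident (tgt a)
  comp_mul : ∀ (a b c d : Arr) (h1 : tgt a = src b) (h2 : tgt c = src d)
    (h3 : tgt (a * c) = src (b * d)), comp (a * c) (b * d) h3 = comp a b h1 * comp c d h2

attribute [instance] GroupGroupoid.objGroup GroupGroupoid.arrGroup

lemma GroupGroupoid.comp_congr (G : GroupGroupoid) {a a' b b' : G.Arr}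
    (ha : a = a') (hb : b = b') (h : G.tgt a = G.src b) (h' : G.tgt a' = G.src b') :
    G.comp a b h = G.comp a' b' h' := by subst ha; subst hb; rfl

/-- `comp a b = a * (1_{tgt a})⁻¹ * b`. -/
lemma GroupGroupoid.comp_eq_left (G : GroupGroupoid) (a b : G.Arr)
    (h : G.tgt a = G.src b) :
    G.comp a b h = a * (G.ident (G.tgt a))⁻¹ * b := by
  have h1 : G.tgt a = G.src (G.ident (G.tgt a)) := (G.src_ident _).symm
  have h2 : G.tgt (1 : G.Arr) = G.src ((G.ident (G.tgt a))⁻¹ * b) := by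
    rw [map_one, map_mul, map_inv, G.src_ident, h, inv_mul_cancel]
  have h3 : G.tgt (a * 1) = G.src (G.ident (G.tgt a) * ((G.ident (G.tgt a))⁻¹ * b)) := by
    rw [mul_one, mul_inv_cancel_left]; exact h
  have e := G.comp_mul a (G.ident (G.tgt a)) 1 ((G.ident (G.tgt a))⁻¹ * b) h1 h2 h3
  have e0 : G.comp a b h = G.comp (a * 1) (G.ident (G.tgt a) * ((G.ident (G.tgt a))⁻¹ * b)) h3 :=
    G.comp_congr (mul_one a).symm (mul_inv_cancel_left _ _).symm h h3
  have h2' : G.tgt (G.ident (G.src ((G.ident (G.tgt a))⁻¹ * b))) =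
      G.src ((G.ident (G.tgt a))⁻¹ * b) := G.tgt_ident _
  have e1 : G.comp (1 : G.Arr) ((G.ident (G.tgt a))⁻¹ * b) h2 =
      G.comp (G.ident (G.src ((G.ident (G.tgt a))⁻¹ * b))) ((G.ident (G.tgt a))⁻¹ * b) h2' :=
    G.comp_congr (by rw [← h2, map_one, map_one]) rfl h2 h2'
  rw [e0, e, G.comp_ident a h1, e1, G.ident_comp, mul_assoc]

/-- `comp a b = b * (1_{src b})⁻¹ * a`. -/
lemma GroupGroupoid.comp_eq_right (G : GroupGroupoid) (a b : G.Arr)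
    (h : G.tgt a = G.src b) :
    G.comp a b h = b * (G.ident (G.src b))⁻¹ * a := by
  have h1 : G.tgt (G.ident (G.src b)) = G.src b := G.tgt_ident _
  have h2 : G.tgt ((G.ident (G.src b))⁻¹ * a) = G.src (1 : G.Arr) := by
    rw [map_one, map_mul, map_inv, G.tgt_ident, h, inv_mul_cancel]
  have h3 : G.tgt (G.ident (G.src b) * ((G.ident (G.src b))⁻¹ * a)) = G.src (b * 1) := by
    rw [mul_one, mul_inv_cancel_left]; exact h
  have e := G.comp_mul (G.ident (G.src b)) b ((G.ident (G.src b))⁻¹ * a) 1 h1 h2 h3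
  have e0 : G.comp a b h = G.comp (G.ident (G.src b) * ((G.ident (G.src b))⁻¹ * a)) (b * 1) h3 :=
    G.comp_congr (mul_inv_cancel_left _ _).symm (mul_one b).symm h h3
  have eb : G.comp (G.ident (G.src b)) b h1 = b := G.ident_comp b h1
  have h2' : G.tgt ((G.ident (G.src b))⁻¹ * a) =
      G.src (G.ident (G.tgt ((G.ident (G.src b))⁻¹ * a))) := (G.src_ident _).symm
  have e1 : G.comp ((G.ident (G.src b))⁻¹ * a) (1 : G.Arr) h2 =
      G.comp ((G.ident (G.src b))⁻¹ * a) (G.ident (G.tgt ((G.ident (G.src b))⁻¹ * a))) h2' :=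
    G.comp_congr rfl (by rw [h2, map_one, map_one]) h2 h2'
  rw [e0, e, eb, e1, G.comp_ident, mul_assoc]

/-- Arrows with target 1 commute with arrows with source 1. -/
lemma GroupGroupoid.costar_comm (G : GroupGroupoid) (a b : G.Arr)
    (ha : G.tgt a = 1) (hb : G.src b = 1) : a * b = b * a := by
  have h : G.tgt a = G.src b := by rw [ha, hb]
  have e1 := G.comp_eq_left a b h
  have e2 := G.comp_eq_right a b h
  rw [ha] at e1; rw [hb] at e2
  rw [map_one, inv_one, mul_one] at e1 e2
  rw [e1] at e2; exact e2


/-- The associated crossed module of a group-groupoid: `M` is the costar at the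
identity object `e = 1` (arrows with target `1`), `P` is the group of objects,
`μ` restricts the source map, and `P` acts on `M` by `m ^ p = (1_p)⁻¹ * m * 1_p`. -/
theorem associated_crossed_module (G : GroupGroupoid) :
    -- the costar at the identity object is a subgroup of the arrow group
    (G.tgt (1 : G.Arr) = 1) ∧
    (∀ a b : G.Arr, G.tgt a = 1 → G.tgt b = 1 → G.tgt (a * b) = 1) ∧
    (∀ a : G.Arr, G.tgt a = 1 → G.tgt a⁻¹ = 1) ∧
    -- the action preserves the costar
    (∀ (m : G.Arr) (p : G.Obj), G.tgt m = 1 →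
      G.tgt ((G.ident p)⁻¹ * m * G.ident p) = 1) ∧
    -- it is a right action, by automorphisms
    (∀ m : G.Arr, (G.ident (1 : G.Obj))⁻¹ * m * G.ident (1 : G.Obj) = m) ∧
    (∀ (m : G.Arr) (p q : G.Obj),
      (G.ident (p * q))⁻¹ * m * G.ident (p * q) =
        (G.ident q)⁻¹ * ((G.ident p)⁻¹ * m * G.ident p) * G.ident q) ∧
    (∀ (m n : G.Arr) (p : G.Obj),
      (G.ident p)⁻¹ * (m * n) * G.ident p =
        ((G.ident p)⁻¹ * m * G.ident p) * ((G.ident p)⁻¹ * n * G.ident p)) ∧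
    -- CM1
    (∀ (m : G.Arr) (p : G.Obj), G.tgt m = 1 →
      G.src ((G.ident p)⁻¹ * m * G.ident p) = p⁻¹ * G.src m * p) ∧
    -- CM2
    (∀ m n : G.Arr, G.tgt m = 1 → G.tgt n = 1 →
      (G.ident (G.src m))⁻¹ * n * G.ident (G.src m) = m⁻¹ * n * m) := by
  refine ⟨map_one G.tgt, ?_, ?_, ?_, ?_, ?_, ?_, ?_, ?_⟩
  · intro a b ha hb; rw [map_mul, ha, hb, one_mul]
  · intro a ha; rw [map_inv, ha, inv_one]
  · intro m p hm
    rw [map_mul, map_mul, map_inv, G.tgt_ident, hm, mul_one, inv_mul_cancel]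
  · intro m; rw [map_one, inv_one, one_mul, mul_one]
  · intro m p q; rw [map_mul]; group
  · intro m n p; group
  · intro m p _
    rw [map_mul, map_mul, map_inv, G.src_ident]
  · intro m n hm hn
    have hb : G.src (G.ident (G.src m) * m⁻¹) = 1 := by
      rw [map_mul, map_inv, G.src_ident, mul_inv_cancel]
    have key := G.costar_comm n (G.ident (G.src m) * m⁻¹) hn hb
    set i := G.ident (G.src m) with hi
    have key' : n * i * m⁻¹ = i * m⁻¹ * n := by rw [mul_assoc]; exact key
    calc (i)⁻¹ * n * i = i⁻¹ * (n * i * m⁻¹) * m := by group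
      _ = i⁻¹ * (i * m⁻¹ * n) * m := by rw [key']
      _ = m⁻¹ * n * m := by group
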